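/- arXiv:0902.4581 — 2 statements merged into one kernel-verified Lean document; each statement's English description precedes it below -/
import Mathlib

section
/- Let n ≥ 2 and g ≥ 0 be integers, let q₀ and q₁ be real polynomials, and let c be a real number with q₀(1) = q₁(1) = c. For t ∈ (0,1) define F(t) = (1−t^{2n−2})(1−t^{2n})(1+t)^{2g}(1−t²)⁻¹ · ∑_{d=1}^{∞} q_{d mod 2}(t) · t^{2d(n−1)+(g−1)(2n−3)} (the exponent 2d(n−1)+(g−1)(2n−3) is an integer ≥ 1 for all d ≥ 1, and the series converges absolutely for each t ∈ (0,1)). Then F(t) tends to n · 2^{2g} · c as t tends to 1 from the left. -/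
/-!
Put `r = t ^ (2n-2)`. The series is `t ^ ((g-1)(2n-3))` times `∑_{d ≥ 1} q_{d mod 2}(t) r ^ d`,
which splits into odd and even terms and sums to `(q₁(t) r + q₀(t) r²) / (1 - r²)`.
The factor `1 - r` cancels against `1 - r² = (1 - r)(1 + r)`, and
`(1 - t^{2n}) / (1 - t²) = ∑_{i<n} t^{2i}`, so on `(0,1)` the function agrees with an expression
continuous at `t = 1`, whose value there is `n · 2^{2g} · (c + c) / 2`.
-/

open Filter Topology Finset

theorem hasSum_parity_geometric {K : Type*} [NormedField K] [CompleteSpace K] {r : K}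
    (hr : ‖r‖ < 1) (a b : K) :
    HasSum (fun d : {d : ℕ // 1 ≤ d} => (if (d : ℕ) % 2 = 0 then b else a) * r ^ (d : ℕ))
      ((a * r + b * r ^ 2) / (1 - r ^ 2)) := by
  set f : ℕ → K := fun k => (if (k + 1) % 2 = 0 then b else a) * r ^ (k + 1)
  have hgeom := hasSum_geometric_of_norm_lt_one (ξ := r ^ 2) (by
    rw [norm_pow]; nlinarith [norm_nonneg r])
  have heven : HasSum (fun k => f (2 * k)) (a * r * (1 - r ^ 2)⁻¹) := by
    have : (fun k => f (2 * k)) = fun k => a * r * (r ^ 2) ^ k := by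
      funext k
      dsimp only [f]
      rw [if_neg (by omega : (2 * k + 1) % 2 ≠ 0)]
      ring
    exact this ▸ hgeom.mul_left _
  have hodd : HasSum (fun k => f (2 * k + 1)) (b * r ^ 2 * (1 - r ^ 2)⁻¹) := by
    have : (fun k => f (2 * k + 1)) = fun k => b * r ^ 2 * (r ^ 2) ^ k := by
      funext k
      dsimp only [f]
      rw [if_pos (by omega : (2 * k + 1 + 1) % 2 = 0)]
      ring
    exact this ▸ hgeom.mul_left _
  rw [div_eq_mul_inv, add_mul]
  -- `ℕ+` is definitionally `{d : ℕ // 1 ≤ d}`, and `Equiv.pnatEquivNat.symm` is `k ↦ k + 1`.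
  refine (Equiv.pnatEquivNat.symm.hasSum_iff
    (f := fun d : ℕ+ => (if (d : ℕ) % 2 = 0 then b else a) * r ^ (d : ℕ))).mp ?_
  exact heven.even_add_odd hodd

theorem tsum_parity_mul_zpow {K : Type*} [NormedField K] [CompleteSpace K] {t : K} (ht0 : t ≠ 0)
    (ht1 : ‖t‖ < 1) {m : ℕ} (hm : m ≠ 0) (E : ℤ) (a b : K) :
    ∑' d : {d : ℕ // 1 ≤ d}, (if (d : ℕ) % 2 = 0 then b else a) * t ^ (2 * (d : ℤ) * m + E) =
      t ^ E * ((a * t ^ (2 * m) + b * (t ^ (2 * m)) ^ 2) / (1 - (t ^ (2 * m)) ^ 2)) := by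
  have hr : ‖t ^ (2 * m)‖ < 1 := by
    rw [norm_pow]; exact pow_lt_one₀ (norm_nonneg t) ht1 (by omega)
  rw [← (hasSum_parity_geometric hr a b).tsum_eq, ← tsum_mul_left]
  congr 1 with d
  have hexp : 2 * (d : ℤ) * m = ((2 * m * d : ℕ) : ℤ) := by push_cast; ring
  rw [zpow_add₀ ht0, hexp, zpow_natCast, pow_mul]
  ring

theorem geom_sum_mul_inv_one_add_eq {K : Type*} [Field K] {x r : K} (hx : x ≠ 1) (hr : r ≠ 1)
    (n : ℕ) :
    (∑ i ∈ range n, x ^ i) * (1 + r)⁻¹ = (1 - r) * (1 - x ^ n) * (1 - x)⁻¹ * (1 - r ^ 2)⁻¹ := by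
  have hx' : 1 - x ≠ 0 := sub_ne_zero.2 hx.symm
  have hr' : 1 - r ≠ 0 := sub_ne_zero.2 hr.symm
  rw [← geom_sum_mul_neg, show 1 - r ^ 2 = (1 - r) * (1 + r) by ring]
  field_simp

/-- Let `n ≥ 2`, `g ≥ 0`, `q₀, q₁` real polynomials with `q₀(1) = q₁(1) = c`.  For
`t ∈ (0,1)` let
`F(t) = (1−t^{2n−2})(1−t^{2n})(1+t)^{2g}(1−t²)⁻¹ ∑_{d≥1} q_{d mod 2}(t) t^{2d(n−1)+(g−1)(2n−3)}`.
Then `F(t) → n · 2^{2g} · c` as `t → 1⁻`. -/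
theorem unstable_strata_limit (n g : ℕ) (hn : 2 ≤ n) (q₀ q₁ : Polynomial ℝ) (c : ℝ)
    (h0 : q₀.eval 1 = c) (h1 : q₁.eval 1 = c) :
    Tendsto
      (fun t : ℝ =>
        (1 - t ^ (2 * n - 2)) * (1 - t ^ (2 * n)) * (1 + t) ^ (2 * g) * (1 - t ^ 2)⁻¹ *
          ∑' d : {d : ℕ // 1 ≤ d},
            (if (d : ℕ) % 2 = 0 then q₀ else q₁).eval t *
              t ^ (2 * (d : ℤ) * ((n : ℤ) - 1) + ((g : ℤ) - 1) * (2 * (n : ℤ) - 3)))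
      (nhdsWithin 1 (Set.Ioo 0 1))
      (nhds ((n : ℝ) * 2 ^ (2 * g) * c)) := by
  obtain ⟨m, rfl⟩ : ∃ m, n = m + 1 := ⟨n - 1, by omega⟩
  set E : ℤ := ((g : ℤ) - 1) * (2 * ((m + 1 : ℕ) : ℤ) - 3)
  set S : ℝ → ℝ := fun t => q₁.eval t * t ^ (2 * m) + q₀.eval t * (t ^ (2 * m)) ^ 2
  set G : ℝ → ℝ := fun t =>
    (∑ i ∈ range (m + 1), (t ^ 2) ^ i) * (1 + t) ^ (2 * g) * t ^ E * (S t / (1 + t ^ (2 * m)))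
  have hG : Tendsto G (𝓝 1) (𝓝 ((m + 1 : ℕ) * 2 ^ (2 * g) * c)) := by
    have hcont : ContinuousAt G 1 := by fun_prop (disch := norm_num)
    convert hcont.tendsto using 2
    simp only [G, S, h0, h1, one_pow, one_zpow, sum_const, card_range, nsmul_eq_mul, mul_one]
    push_cast
    ring
  refine (hG.mono_left nhdsWithin_le_nhds).congr' ?_
  filter_upwards [self_mem_nhdsWithin] with t ⟨ht0, ht1⟩
  have hseries := tsum_parity_mul_zpow ht0.ne' (by rwa [Real.norm_of_nonneg ht0.le])
    (m := m) (by omega) E (q₁.eval t) (q₀.eval t)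
  have hx : t ^ 2 ≠ 1 := by nlinarith
  have hr : t ^ (2 * m) ≠ 1 := (pow_lt_one₀ ht0.le ht1 (by omega)).ne
  have hm : ((m + 1 : ℕ) : ℤ) - 1 = m := by push_cast; ring
  simp only [apply_ite (Polynomial.eval t), hm, hseries, show 2 * (m + 1) - 2 = 2 * m by omega,
    pow_mul t 2 (m + 1)]
  linear_combination (1 + t) ^ (2 * g) * t ^ E * S t * geom_sum_mul_inv_one_add_eq hx hr (m + 1)
end

section
/- Let g ≥ 0 and n ≥ 1, let S¹ denote the circle group (the unit circle in ℂ), and let T = (S¹)^n. The subspace { X ∈ T^{g+1} : (X₀ X₁ ⋯ X_g)² = 1 } of T^{g+1}, with the subspace topology, is homeomorphic to (S¹)^{ng} × (ℤ/2ℤ)^n. -/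
/-!
The shear `X ↦ (X₀X₁⋯X_g, X₁, …, X_g)` is a homeomorphism `T^{g+1} ≃ T × T^g` of the
topological group `T = (S¹)^n`, and it carries the subspace onto `{p ∈ T | p² = 1} × T^g`.
The first factor is the finite, hence discrete, set `{±1}^n ≅ (ℤ/2ℤ)^n`.
-/

instance : TopologicalSpace (ZMod 2) := ⊥

instance : DiscreteTopology (ZMod 2) := ⟨rfl⟩

section Shear

variable (G : Type*) [TopologicalSpace G] [CommGroup G] [IsTopologicalGroup G] (g : ℕ)

@[simps]
def Homeomorph.piFinSuccProdTail : (Fin (g + 1) → G) ≃ₜ G × (Fin g → G) where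
  toFun X := (∏ i, X i, Fin.tail X)
  invFun q := Fin.cons (q.1 * (∏ j, q.2 j)⁻¹) q.2
  left_inv X := by simp [Fin.prod_univ_succ, Fin.tail]
  right_inv q := by simp [Fin.prod_cons]
  continuous_toFun := by fun_prop
  continuous_invFun := by fun_prop

def Homeomorph.setOfProdMem (S : Set G) :
    {X : Fin (g + 1) → G | ∏ i, X i ∈ S} ≃ₜ S × (Fin g → G) :=
  ((piFinSuccProdTail G g).subtype (q := (· ∈ S ×ˢ _root_.Set.univ)) fun X => by simp).trans <|
    (Set.prod S _root_.Set.univ).trans ((Homeomorph.refl S).prodCongr (Set.univ _))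

end Shear

def Homeomorph.piFinMul (X : Type*) [TopologicalSpace X] (m n : ℕ) :
    (Fin (m * n) → X) ≃ₜ (Fin n → Fin m → X) where
  toFun f j i := f (finProdFinEquiv (i, j))
  invFun F k := F (finProdFinEquiv.symm k).2 (finProdFinEquiv.symm k).1
  left_inv f := funext fun k => by simp only [Prod.mk.eta, Equiv.apply_symm_apply]
  right_inv F := by simp
  continuous_toFun := by fun_prop
  continuous_invFun := by fun_prop

namespace Circle

noncomputable def sqEqOneEquiv : {z : Circle // z ^ 2 = 1} ≃ ZMod 2 :=
  (Equiv.subtypeEquiv (_root_.toUnits : Circle ≃* Circleˣ).toEquiv fun z => by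
      simp [mem_rootsOfUnity, Units.ext_iff]).trans
    (Equiv.ofBijective _ (bijective_rootsOfUnityAddChar 2)).symm

noncomputable def piSqEqOneEquiv (ι : Type*) : {p : ι → Circle // p ^ 2 = 1} ≃ (ι → ZMod 2) :=
  ((Equiv.subtypeEquivRight fun _ => funext_iff).trans
      (Equiv.subtypePiEquivPi (p := fun _ z => z ^ 2 = 1))).trans
    (Equiv.piCongrRight fun _ => sqEqOneEquiv)

noncomputable def piSqEqOneHomeomorph (ι : Type*) [Finite ι] :
    {p : ι → Circle // p ^ 2 = 1} ≃ₜ (ι → ZMod 2) :=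
  have : Finite {p : ι → Circle // p ^ 2 = 1} := .of_equiv _ (piSqEqOneEquiv ι).symm
  .ofDiscrete (piSqEqOneEquiv ι)

end Circle

theorem hom_surfaceGroup_torus_homeomorph_general (g n : ℕ) :
    Nonempty
      (({X : Fin (g + 1) → (Fin n → Circle) | (∏ i, X i) ^ 2 = 1} :
          Set (Fin (g + 1) → (Fin n → Circle))) ≃ₜ
        (Fin (n * g) → Circle) × (Fin n → ZMod 2)) :=
  ⟨(Homeomorph.setOfProdMem (Fin n → Circle) g {p | p ^ 2 = 1}).trans <|
    ((Circle.piSqEqOneHomeomorph (Fin n)).prodCongr (Homeomorph.piFinMul Circle n g).symm).trans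
      (Homeomorph.prodComm _ _)⟩

/-- For `T = (S¹)^n`, the subspace `{X ∈ T^{g+1} : (X₀X₁⋯X_g)² = 1}` of `T^{g+1}` is
homeomorphic to `(S¹)^{ng} × (ℤ/2ℤ)^n`. -/
theorem hom_surfaceGroup_torus_homeomorph (g n : ℕ) (hn : 1 ≤ n) :
    Nonempty
      (({X : Fin (g + 1) → (Fin n → Circle) | (∏ i, X i) ^ 2 = 1} :
          Set (Fin (g + 1) → (Fin n → Circle))) ≃ₜ
        (Fin (n * g) → Circle) × (Fin n → ZMod 2)) :=
  hom_surfaceGroup_torus_homeomorph_general g n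
end
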